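/- arXiv:2307.13474 — 2 statements merged into one kernel-verified Lean document; each statement's English description precedes it below -/
import Mathlib

section
/- (Converse bound R_{Z_Σ} ≥ K) In the secure aggregation with an oblivious server model, assuming the correctness constraint and the server security constraint (user security is not needed), the keys satisfy H(Z_1, …, Z_K | W_1, …, W_K) ≥ H(X_1, …, X_K) ≥ K·L; consequently, since (Z_1,…,Z_K) is a deterministic function of the source key Z_Σ, one has H(Z_Σ) ≥ K·L, so L_{Z_Σ} ≥ K·L and R_{Z_Σ} = L_{Z_Σ}/L ≥ K. -/
open Classical
open scoped BigOperators

/-- Probability of the event `E` under the probability mass function `p`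
on a finite sample space `Ω`. -/
noncomputable def pr {Ω : Type*} [Fintype Ω] (p : Ω → ℝ) (E : Ω → Prop) : ℝ :=
  ∑ ω, if E ω then p ω else 0

/-- Shannon entropy of the random variable `X` in base-`q` units. -/
noncomputable def ent {Ω α : Type*} [Fintype Ω] [Fintype α] (q : ℕ) (p : Ω → ℝ)
    (X : Ω → α) : ℝ :=
  -∑ a, pr p (fun ω => X ω = a) * Real.logb q (pr p (fun ω => X ω = a))

/-- Conditional entropy `H(X | Y) = H(X, Y) − H(Y)`, base `q`. -/
noncomputable def condEnt {Ω α β : Type*} [Fintype Ω] [Fintype α] [Fintype β]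
    (q : ℕ) (p : Ω → ℝ) (X : Ω → α) (Y : Ω → β) : ℝ :=
  ent q p (fun ω => (X ω, Y ω)) - ent q p Y

/-- Mutual information `I(X ; Y) = H(X) + H(Y) − H(X, Y)`, base `q`. -/
noncomputable def mutInf {Ω α β : Type*} [Fintype Ω] [Fintype α] [Fintype β]
    (q : ℕ) (p : Ω → ℝ) (X : Ω → α) (Y : Ω → β) : ℝ :=
  ent q p X + ent q p Y - ent q p (fun ω => (X ω, Y ω))

/-- Conditional mutual information
`I(X ; Y | Z) = H(X, Z) + H(Y, Z) − H(X, Y, Z) − H(Z)`, base `q`. -/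
noncomputable def condMutInf {Ω α β γ : Type*} [Fintype Ω] [Fintype α] [Fintype β] [Fintype γ]
    (q : ℕ) (p : Ω → ℝ) (X : Ω → α) (Y : Ω → β) (Z : Ω → γ) : ℝ :=
  ent q p (fun ω => (X ω, Z ω)) + ent q p (fun ω => (Y ω, Z ω))
    - ent q p (fun ω => (X ω, Y ω, Z ω)) - ent q p Z

set_option linter.unusedSectionVars false
set_option maxHeartbeats 1000000

section SAlemmas

lemma sa_nml_add {s t : ℝ} (hs : 0 ≤ s) (ht : 0 ≤ t) :
    Real.negMulLog (s + t) ≤ Real.negMulLog s + Real.negMulLog t := by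
  rcases eq_or_lt_of_le hs with h | hs'
  · simp [← h]
  rcases eq_or_lt_of_le ht with h | ht'
  · simp [← h]
  have h1 : Real.log s ≤ Real.log (s + t) := Real.log_le_log hs' (by linarith)
  have h2 : Real.log t ≤ Real.log (s + t) := Real.log_le_log ht' (by linarith)
  simp only [Real.negMulLog, neg_mul]
  nlinarith

lemma sa_nml_add_lt {s t : ℝ} (hs : 0 < s) (ht : 0 < t) :
    Real.negMulLog (s + t) < Real.negMulLog s + Real.negMulLog t := by
  have h1 : Real.log s < Real.log (s + t) := Real.log_lt_log hs (by linarith)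
  have h2 : Real.log t ≤ Real.log (s + t) := Real.log_le_log ht (by linarith)
  simp only [Real.negMulLog, neg_mul]
  nlinarith

lemma sa_nml_sum_le {ι : Type*} (s : Finset ι) (f : ι → ℝ) (hf : ∀ i ∈ s, 0 ≤ f i) :
    Real.negMulLog (∑ i ∈ s, f i) ≤ ∑ i ∈ s, Real.negMulLog (f i) := by
  induction s using Finset.induction_on with
  | empty => simp
  | @insert a s' hx ih =>
    rw [Finset.sum_insert hx, Finset.sum_insert hx]
    calc Real.negMulLog (f a + ∑ i ∈ s', f i)
        ≤ Real.negMulLog (f a) + Real.negMulLog (∑ i ∈ s', f i) :=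
          sa_nml_add (hf a (Finset.mem_insert_self a s'))
            (Finset.sum_nonneg fun i hi => hf i (Finset.mem_insert_of_mem hi))
      _ ≤ _ := by
          have := ih (fun i hi => hf i (Finset.mem_insert_of_mem hi))
          linarith

lemma sa_nml_sum_lt {ι : Type*} [Fintype ι] (f : ι → ℝ) (hf : ∀ i, 0 ≤ f i)
    {i j : ι} (hij : i ≠ j) (hi : 0 < f i) (hj : 0 < f j) :
    Real.negMulLog (∑ i, f i) < ∑ i, Real.negMulLog (f i) := by
  classical
  have hjmem : j ∈ (Finset.univ.erase i) := Finset.mem_erase.2 ⟨hij.symm, Finset.mem_univ j⟩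
  have h1 : ∑ k, f k = f i + ∑ k ∈ Finset.univ.erase i, f k :=
    (Finset.add_sum_erase _ f (Finset.mem_univ i)).symm
  have h2 : ∑ k ∈ Finset.univ.erase i, f k
      = f j + ∑ k ∈ (Finset.univ.erase i).erase j, f k :=
    (Finset.add_sum_erase _ f hjmem).symm
  have hRnn : 0 ≤ ∑ k ∈ (Finset.univ.erase i).erase j, f k :=
    Finset.sum_nonneg fun k _ => hf k
  have hstep : Real.negMulLog (∑ k, f k)
      < Real.negMulLog (f i) + Real.negMulLog (f j + ∑ k ∈ (Finset.univ.erase i).erase j, f k) := by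
    rw [h1, h2]
    exact sa_nml_add_lt hi (by linarith)
  have hstep2 : Real.negMulLog (f j + ∑ k ∈ (Finset.univ.erase i).erase j, f k)
      ≤ Real.negMulLog (f j) + ∑ k ∈ (Finset.univ.erase i).erase j, Real.negMulLog (f k) := by
    calc Real.negMulLog (f j + ∑ k ∈ (Finset.univ.erase i).erase j, f k)
        ≤ Real.negMulLog (f j) + Real.negMulLog (∑ k ∈ (Finset.univ.erase i).erase j, f k) :=
          sa_nml_add (le_of_lt hj) hRnn
      _ ≤ _ := by
          have := sa_nml_sum_le ((Finset.univ.erase i).erase j) f (fun k _ => hf k)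
          linarith
  have h3 : ∑ k, Real.negMulLog (f k)
      = Real.negMulLog (f i) + (Real.negMulLog (f j)
        + ∑ k ∈ (Finset.univ.erase i).erase j, Real.negMulLog (f k)) := by
    rw [← Finset.add_sum_erase _ _ (Finset.mem_univ i), ← Finset.add_sum_erase _ _ hjmem]
  linarith

lemma sa_gibbs {ι : Type*} [Fintype ι] (f g : ι → ℝ) (hf : ∀ i, 0 ≤ f i)
    (hg : ∀ i, 0 ≤ g i) (hfg : ∀ i, g i = 0 → f i = 0)
    (hsum : ∑ i, g i ≤ ∑ i, f i) :
    ∑ i, f i * Real.log (g i) ≤ ∑ i, f i * Real.log (f i) := by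
  have key : ∀ i, f i * Real.log (g i) - f i * Real.log (f i) ≤ g i - f i := by
    intro i
    rcases eq_or_lt_of_le (hf i) with h | hfi
    · simp [← h, hg i]
    have hgi : 0 < g i := by
      rcases eq_or_lt_of_le (hg i) with h' | h'
      · exact absurd (hfg i h'.symm) (by positivity)
      · exact h'
    have hlog : Real.log (g i / f i) ≤ g i / f i - 1 :=
      Real.log_le_sub_one_of_pos (by positivity)
    rw [Real.log_div (ne_of_gt hgi) (ne_of_gt hfi)] at hlog
    have := mul_le_mul_of_nonneg_left hlog (le_of_lt hfi)
    calc f i * Real.log (g i) - f i * Real.log (f i)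
        = f i * (Real.log (g i) - Real.log (f i)) := by ring
      _ ≤ f i * (g i / f i - 1) := mul_le_mul_of_nonneg_left hlog (le_of_lt hfi)
      _ = g i - f i := by field_simp
  have := Finset.sum_le_sum (fun i (_ : i ∈ Finset.univ) => key i)
  rw [Finset.sum_sub_distrib, Finset.sum_sub_distrib] at this
  linarith


section SA
variable {Ω : Type*} [Fintype Ω] {α β : Type*} [Fintype α] [Fintype β]
variable {p : Ω → ℝ}

lemma sa_pr_nonneg (hp0 : ∀ ω, 0 ≤ p ω) (E : Ω → Prop) : 0 ≤ pr p E := by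
  unfold pr
  refine Finset.sum_nonneg fun ω _ => ?_
  split <;> simp [hp0 ω]

lemma sa_pr_congr {E E' : Ω → Prop} (h : ∀ ω, E ω ↔ E' ω) : pr p E = pr p E' := by
  unfold pr
  refine Finset.sum_congr rfl fun ω _ => ?_
  simp only [h ω]

lemma sa_pr_mono (hp0 : ∀ ω, 0 ≤ p ω) {E E' : Ω → Prop} (h : ∀ ω, E ω → E' ω) :
    pr p E ≤ pr p E' := by
  unfold pr
  refine Finset.sum_le_sum fun ω _ => ?_
  by_cases hE : E ω
  · simp [hE, h ω hE]
  · simp only [if_neg hE]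
    split <;> simp [hp0 ω]

lemma sa_le_pr (hp0 : ∀ ω, 0 ≤ p ω) {E : Ω → Prop} {ω : Ω} (hE : E ω) : p ω ≤ pr p E := by
  unfold pr
  have := Finset.single_le_sum (f := fun ω' => if E ω' then p ω' else 0)
    (fun ω' _ => by split <;> simp [hp0 ω']) (Finset.mem_univ ω)
  simpa [if_pos hE] using this

lemma sa_exists_of_pr_pos (hp0 : ∀ ω, 0 ≤ p ω) {E : Ω → Prop} (h : 0 < pr p E) :
    ∃ ω, 0 < p ω ∧ E ω := by
  by_contra hc
  push_neg at hc
  have : pr p E ≤ 0 := by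
    unfold pr
    refine Finset.sum_nonpos fun ω _ => ?_
    by_cases hE : E ω
    · simp only [if_pos hE]
      rcases lt_or_eq_of_le (hp0 ω) with h' | h'
      · exact absurd hE (by simpa using hc ω h')
      · simp [← h']
    · simp [hE]
  linarith

lemma sa_pr_le_one (hp0 : ∀ ω, 0 ≤ p ω) (hp1 : (∑ ω, p ω) = 1) (E : Ω → Prop) :
    pr p E ≤ 1 := by
  rw [← hp1]
  unfold pr
  refine Finset.sum_le_sum fun ω _ => ?_
  split <;> simp [hp0 ω]

lemma sa_pr_marginal (X : Ω → α) (Y : Ω → β) (a : α) :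
    pr p (fun ω => X ω = a) = ∑ b, pr p (fun ω => X ω = a ∧ Y ω = b) := by
  unfold pr
  rw [Finset.sum_comm]
  refine Finset.sum_congr rfl fun ω _ => ?_
  by_cases hX : X ω = a
  · simp [hX]
  · simp [hX]

lemma sa_sum_pr (hp1 : (∑ ω, p ω) = 1) (X : Ω → α) :
    ∑ a, pr p (fun ω => X ω = a) = 1 := by
  unfold pr
  rw [Finset.sum_comm, ← hp1]
  refine Finset.sum_congr rfl fun ω _ => ?_
  simp

lemma sa_ent_eq (q : ℕ) (X : Ω → α) :
    ent q p X = (∑ a, Real.negMulLog (pr p (fun ω => X ω = a))) / Real.log q := by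
  unfold ent
  rw [← Finset.sum_neg_distrib, Finset.sum_div]
  refine Finset.sum_congr rfl fun a _ => ?_
  rw [Real.negMulLog, Real.logb]
  ring


lemma sa_dist_comp (X : Ω → α) (g : α → β) (b : β) :
    pr p (fun ω => g (X ω) = b) = ∑ a, if g a = b then pr p (fun ω => X ω = a) else 0 := by
  rw [sa_pr_marginal (p := p) (fun ω => g (X ω)) X b]
  refine Finset.sum_congr rfl fun a _ => ?_
  by_cases h : g a = b
  · rw [if_pos h]
    exact sa_pr_congr fun ω => ⟨fun hh => hh.2, fun hh => ⟨by rw [hh, h], hh⟩⟩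
  · rw [if_neg h]
    have h0 : pr p (fun ω => g (X ω) = b ∧ X ω = a) = pr p (fun _ => False) :=
      sa_pr_congr fun ω => ⟨fun hh => h (by rw [← hh.2]; exact hh.1), False.elim⟩
    rw [h0]; unfold pr; simp

lemma sa_ent_comp_le (hp0 : ∀ ω, 0 ≤ p ω) {q : ℕ} (hq : 1 < q) (X : Ω → α) (g : α → β) :
    ent q p (fun ω => g (X ω)) ≤ ent q p X := by
  rw [sa_ent_eq, sa_ent_eq]
  have hlq : 0 < Real.log q := Real.log_pos (by exact_mod_cast hq)
  rw [div_le_div_iff_of_pos_right hlq]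
  calc ∑ b, Real.negMulLog (pr p (fun ω => g (X ω) = b))
      ≤ ∑ b, ∑ a, (if g a = b then Real.negMulLog (pr p (fun ω => X ω = a)) else 0) := by
        refine Finset.sum_le_sum fun b _ => ?_
        rw [sa_dist_comp]
        calc Real.negMulLog (∑ a, if g a = b then pr p (fun ω => X ω = a) else 0)
            ≤ ∑ a, Real.negMulLog (if g a = b then pr p (fun ω => X ω = a) else 0) :=
              sa_nml_sum_le _ _ (fun a _ => by
                by_cases h : g a = b
                · rw [if_pos h]; exact sa_pr_nonneg hp0 _
                · rw [if_neg h])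
          _ = ∑ a, (if g a = b then Real.negMulLog (pr p (fun ω => X ω = a)) else 0) := by
              refine Finset.sum_congr rfl fun a _ => ?_
              split <;> simp
    _ = ∑ a, Real.negMulLog (pr p (fun ω => X ω = a)) := by
        rw [Finset.sum_comm]
        refine Finset.sum_congr rfl fun a _ => ?_
        simp

lemma sa_ent_comp_eq (hp0 : ∀ ω, 0 ≤ p ω) (q : ℕ) (X : Ω → α) (g : α → β)
    (hinj : ∀ a a', 0 < pr p (fun ω => X ω = a) → 0 < pr p (fun ω => X ω = a') →
      g a = g a' → a = a') :
    ent q p (fun ω => g (X ω)) = ent q p X := by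
  rw [sa_ent_eq, sa_ent_eq]
  congr 1
  set T : Finset α := Finset.univ.filter (fun a => 0 < pr p (fun ω => X ω = a)) with hT
  have hzero : ∀ a, a ∉ T → pr p (fun ω => X ω = a) = 0 := by
    intro a ha
    have : ¬ 0 < pr p (fun ω => X ω = a) := by
      intro h; exact ha (Finset.mem_filter.2 ⟨Finset.mem_univ a, h⟩)
    exact le_antisymm (not_lt.1 this) (sa_pr_nonneg hp0 _)
  have hXT : ∑ a, Real.negMulLog (pr p (fun ω => X ω = a))
      = ∑ a ∈ T, Real.negMulLog (pr p (fun ω => X ω = a)) := by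
    symm
    refine Finset.sum_subset (Finset.subset_univ T) fun a _ ha => ?_
    rw [hzero a ha]; simp
  have hmemT : ∀ a ∈ T, 0 < pr p (fun ω => X ω = a) := fun a ha => (Finset.mem_filter.1 ha).2
  have hYval : ∀ a ∈ T, pr p (fun ω => g (X ω) = g a) = pr p (fun ω => X ω = a) := by
    intro a haT
    rw [sa_dist_comp]
    rw [Finset.sum_eq_single a]
    · rw [if_pos rfl]
    · intro a' _ hne
      by_cases h : g a' = g a
      · rw [if_pos h]
        by_contra hne2
        have : 0 < pr p (fun ω => X ω = a') :=
          lt_of_le_of_ne (sa_pr_nonneg hp0 _) (Ne.symm hne2)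
        exact hne (hinj a' a this (hmemT a haT) h)
      · rw [if_neg h]
    · intro h; exact absurd (Finset.mem_univ a) h
  have hYzero : ∀ b, b ∉ T.image g → pr p (fun ω => g (X ω) = b) = 0 := by
    intro b hb
    rw [sa_dist_comp]
    refine Finset.sum_eq_zero fun a _ => ?_
    by_cases h : g a = b
    · rw [if_pos h]
      refine hzero a fun haT => hb ?_
      exact Finset.mem_image.2 ⟨a, haT, h⟩
    · rw [if_neg h]
  have hYT : ∑ b, Real.negMulLog (pr p (fun ω => g (X ω) = b))
      = ∑ b ∈ T.image g, Real.negMulLog (pr p (fun ω => g (X ω) = b)) := by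
    symm
    refine Finset.sum_subset (Finset.subset_univ _) fun b _ hb => ?_
    rw [hYzero b hb]; simp
  rw [hYT, hXT]
  rw [Finset.sum_image (fun a ha a' ha' h => hinj a a' (hmemT a ha) (hmemT a' ha') h)]
  exact Finset.sum_congr rfl fun a ha => by rw [hYval a ha]

lemma sa_pair_dist (A : Ω → α) (B : Ω → β) (c : α × β) :
    pr p (fun ω => (A ω, B ω) = c) = pr p (fun ω => A ω = c.1 ∧ B ω = c.2) :=
  sa_pr_congr fun ω => by rw [Prod.ext_iff]

lemma sa_ent_pair_le_add (hp0 : ∀ ω, 0 ≤ p ω) (hp1 : (∑ ω, p ω) = 1) {q : ℕ} (hq : 1 < q)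
    (A : Ω → α) (B : Ω → β) :
    ent q p (fun ω => (A ω, B ω)) ≤ ent q p A + ent q p B := by
  have hlq : 0 < Real.log q := Real.log_pos (by exact_mod_cast hq)
  set r : α × β → ℝ := fun c => pr p (fun ω => A ω = c.1 ∧ B ω = c.2) with hr
  set rA : α → ℝ := fun a => pr p (fun ω => A ω = a) with hrA
  set rB : β → ℝ := fun b => pr p (fun ω => B ω = b) with hrB
  have hrnn : ∀ c, 0 ≤ r c := fun c => sa_pr_nonneg hp0 _
  have hrAnn : ∀ a, 0 ≤ rA a := fun a => sa_pr_nonneg hp0 _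
  have hrBnn : ∀ b, 0 ≤ rB b := fun b => sa_pr_nonneg hp0 _
  have hmargA : ∀ a, rA a = ∑ b, r (a, b) := fun a => sa_pr_marginal A B a
  have hmargB : ∀ b, rB b = ∑ a, r (a, b) := by
    intro b
    show pr p (fun ω => B ω = b) = ∑ a, r (a, b)
    rw [sa_pr_marginal (p := p) B A b]
    exact Finset.sum_congr rfl fun a _ => sa_pr_congr fun ω => and_comm
  have hsumA : ∑ a, rA a = 1 := sa_sum_pr hp1 A
  have hsumB : ∑ b, rB b = 1 := sa_sum_pr hp1 B
  have hsumr : ∑ c, r c = 1 := by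
    rw [Fintype.sum_prod_type]
    calc ∑ a, ∑ b, r (a, b) = ∑ a, rA a :=
          Finset.sum_congr rfl fun a _ => (hmargA a).symm
      _ = 1 := hsumA
  have hgibbs : ∑ c, r c * Real.log (rA c.1 * rB c.2) ≤ ∑ c, r c * Real.log (r c) := by
    refine sa_gibbs r (fun c => rA c.1 * rB c.2) hrnn
      (fun c => mul_nonneg (hrAnn _) (hrBnn _)) ?_ ?_
    · intro c hc
      rcases mul_eq_zero.1 hc with h | h
      · refine le_antisymm ?_ (hrnn c)
        calc r c ≤ rA c.1 := sa_pr_mono hp0 fun ω hh => hh.1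
          _ = 0 := h
      · refine le_antisymm ?_ (hrnn c)
        calc r c ≤ rB c.2 := sa_pr_mono hp0 fun ω hh => hh.2
          _ = 0 := h
    · rw [hsumr, Fintype.sum_prod_type]
      have h2 : ∑ a, ∑ b, rA a * rB b = (∑ a, rA a) * (∑ b, rB b) := by
        rw [Finset.sum_mul_sum]
      rw [h2, hsumA, hsumB]; norm_num
  have hsplit : ∑ c, r c * Real.log (rA c.1 * rB c.2)
      = ∑ c, r c * Real.log (rA c.1) + ∑ c, r c * Real.log (rB c.2) := by
    rw [← Finset.sum_add_distrib]
    refine Finset.sum_congr rfl fun c _ => ?_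
    rcases eq_or_lt_of_le (hrnn c) with h | h
    · rw [← h]; ring
    · have h1 : 0 < rA c.1 := lt_of_lt_of_le h (sa_pr_mono hp0 fun ω hh => hh.1)
      have h2 : 0 < rB c.2 := lt_of_lt_of_le h (sa_pr_mono hp0 fun ω hh => hh.2)
      rw [Real.log_mul (ne_of_gt h1) (ne_of_gt h2)]; ring
  have hA : ∑ c, r c * Real.log (rA c.1) = ∑ a, rA a * Real.log (rA a) := by
    rw [Fintype.sum_prod_type]
    refine Finset.sum_congr rfl fun a _ => ?_
    dsimp only
    rw [← Finset.sum_mul, ← hmargA a]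
  have hB : ∑ c, r c * Real.log (rB c.2) = ∑ b, rB b * Real.log (rB b) := by
    rw [Fintype.sum_prod_type, Finset.sum_comm]
    refine Finset.sum_congr rfl fun b _ => ?_
    dsimp only
    rw [← Finset.sum_mul, ← hmargB b]
  rw [sa_ent_eq, sa_ent_eq, sa_ent_eq, ← add_div, div_le_div_iff_of_pos_right hlq]
  have e1 : ∑ c : α × β, Real.negMulLog (pr p (fun ω => (A ω, B ω) = c))
      = ∑ c, Real.negMulLog (r c) :=
    Finset.sum_congr rfl fun c _ => by rw [sa_pair_dist]
  rw [e1]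
  simp only [Real.negMulLog, neg_mul, Finset.sum_neg_distrib]
  rw [hsplit, hA, hB] at hgibbs
  linarith

lemma sa_ent_le_logb_card (hp0 : ∀ ω, 0 ≤ p ω) (hp1 : (∑ ω, p ω) = 1) {q : ℕ} (hq : 1 < q)
    [Nonempty α] (X : Ω → α) :
    ent q p X ≤ Real.logb q (Fintype.card α) := by
  have hlq : 0 < Real.log q := Real.log_pos (by exact_mod_cast hq)
  have hcard : (0 : ℝ) < (Fintype.card α : ℝ) := by
    exact_mod_cast Fintype.card_pos
  set f : α → ℝ := fun a => pr p (fun ω => X ω = a) with hf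
  have hgibbs := sa_gibbs f (fun _ => (Fintype.card α : ℝ)⁻¹)
    (fun a => sa_pr_nonneg hp0 _) (fun _ => by positivity)
    (fun a h => absurd h (by positivity)) (by
      rw [sa_sum_pr hp1 X, Finset.sum_const, nsmul_eq_mul, Finset.card_univ,
        mul_inv_cancel₀ (ne_of_gt hcard)])
  have hleft : ∑ a, f a * Real.log ((Fintype.card α : ℝ)⁻¹)
      = - Real.log (Fintype.card α) := by
    rw [← Finset.sum_mul, sa_sum_pr hp1 X, one_mul, Real.log_inv]
  rw [hleft] at hgibbs
  rw [sa_ent_eq, Real.logb, div_le_div_iff_of_pos_right hlq]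
  simp only [Real.negMulLog, neg_mul, Finset.sum_neg_distrib]
  linarith

lemma sa_condEnt_zero_fun (hp0 : ∀ ω, 0 ≤ p ω) {q : ℕ} (hq : 1 < q)
    {A : Ω → α} {B : Ω → β} (h : condEnt q p A B = 0) :
    ∀ ω ω', 0 < p ω → 0 < p ω' → B ω = B ω' → A ω = A ω' := by
  have hlq : 0 < Real.log q := Real.log_pos (by exact_mod_cast hq)
  set r : α × β → ℝ := fun c => pr p (fun ω => A ω = c.1 ∧ B ω = c.2) with hr
  have hrnn : ∀ c, 0 ≤ r c := fun c => sa_pr_nonneg hp0 _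
  have hmargB : ∀ b, pr p (fun ω => B ω = b) = ∑ a, r (a, b) := by
    intro b
    rw [sa_pr_marginal (p := p) B A b]
    exact Finset.sum_congr rfl fun a _ => sa_pr_congr fun ω => and_comm
  have hsums : ∑ b, Real.negMulLog (∑ a, r (a, b))
      = ∑ b, ∑ a, Real.negMulLog (r (a, b)) := by
    have h0 : ent q p (fun ω => (A ω, B ω)) = ent q p B := by
      unfold condEnt at h; linarith
    rw [sa_ent_eq, sa_ent_eq] at h0
    have h1 : ∑ c : α × β, Real.negMulLog (pr p (fun ω => (A ω, B ω) = c))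
        = ∑ b, ∑ a, Real.negMulLog (r (a, b)) := by
      rw [Fintype.sum_prod_type, Finset.sum_comm]
      exact Finset.sum_congr rfl fun b _ => Finset.sum_congr rfl fun a _ => by
        rw [sa_pair_dist]
    have h2 : ∑ b, Real.negMulLog (pr p (fun ω => B ω = b))
        = ∑ b, Real.negMulLog (∑ a, r (a, b)) :=
      Finset.sum_congr rfl fun b _ => by rw [hmargB b]
    have h3 : ∑ c : α × β, Real.negMulLog (pr p (fun ω => (A ω, B ω) = c))
        = ∑ b, Real.negMulLog (pr p (fun ω => B ω = b)) := by
      field_simp at h0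
      exact h0
    rw [h1, h2] at h3
    exact h3.symm
  have hterm : ∀ b, Real.negMulLog (∑ a, r (a, b)) = ∑ a, Real.negMulLog (r (a, b)) := by
    have hle : ∀ b ∈ Finset.univ, Real.negMulLog (∑ a, r (a, b))
        ≤ ∑ a, Real.negMulLog (r (a, b)) :=
      fun b _ => sa_nml_sum_le _ _ fun a _ => hrnn _
    intro b
    exact (Finset.sum_eq_sum_iff_of_le hle).1 hsums b (Finset.mem_univ b)
  intro ω ω' hω hω' hB
  by_contra hA
  have h1 : 0 < r (A ω, B ω) :=
    lt_of_lt_of_le hω (sa_le_pr hp0 ⟨rfl, rfl⟩)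
  have h2 : 0 < r (A ω', B ω) :=
    lt_of_lt_of_le hω' (sa_le_pr hp0 ⟨rfl, hB.symm⟩)
  have hlt := sa_nml_sum_lt (fun a => r (a, B ω)) (fun a => hrnn _) hA h1 h2
  rw [hterm (B ω)] at hlt
  exact lt_irrefl _ hlt

lemma sa_ent_pair_uniform (hp0 : ∀ ω, 0 ≤ p ω) (hp1 : (∑ ω, p ω) = 1) {q : ℕ} (hq : 1 < q)
    [Nonempty α] (A : Ω → α) (B : Ω → β)
    (hu : ∀ a b, pr p (fun ω => A ω = a ∧ B ω = b)
      = (Fintype.card α : ℝ)⁻¹ * pr p (fun ω => B ω = b)) :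
    ent q p (fun ω => (A ω, B ω)) = Real.logb q (Fintype.card α) + ent q p B := by
  have hlq : 0 < Real.log q := Real.log_pos (by exact_mod_cast hq)
  have hcard : (0 : ℝ) < (Fintype.card α : ℝ) := by exact_mod_cast Fintype.card_pos
  set N : ℝ := (Fintype.card α : ℝ) with hN
  rw [sa_ent_eq, sa_ent_eq]
  have key : ∑ c : α × β, Real.negMulLog (pr p (fun ω => (A ω, B ω) = c))
      = Real.log N + ∑ b, Real.negMulLog (pr p (fun ω => B ω = b)) := by
    have e1 : ∀ c : α × β, pr p (fun ω => (A ω, B ω) = c)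
        = N⁻¹ * pr p (fun ω => B ω = c.2) := by
      intro c; rw [sa_pair_dist]; exact hu c.1 c.2
    calc ∑ c : α × β, Real.negMulLog (pr p (fun ω => (A ω, B ω) = c))
        = ∑ _a : α, ∑ b : β, Real.negMulLog (N⁻¹ * pr p (fun ω => B ω = b)) := by
          rw [Fintype.sum_prod_type]
          exact Finset.sum_congr rfl fun a _ => Finset.sum_congr rfl fun b _ => by
            rw [e1 (a, b)]
      _ = N * ∑ b : β, Real.negMulLog (N⁻¹ * pr p (fun ω => B ω = b)) := by
          rw [Finset.sum_const, nsmul_eq_mul, Finset.card_univ, ← hN]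
      _ = N * ∑ b : β, (pr p (fun ω => B ω = b) * Real.negMulLog N⁻¹
            + N⁻¹ * Real.negMulLog (pr p (fun ω => B ω = b))) := by
          congr 1
          exact Finset.sum_congr rfl fun b _ => Real.negMulLog_mul N⁻¹ _
      _ = Real.log N + ∑ b, Real.negMulLog (pr p (fun ω => B ω = b)) := by
          rw [Finset.sum_add_distrib, ← Finset.sum_mul, sa_sum_pr hp1 B, one_mul,
            ← Finset.mul_sum, mul_add]
          rw [← mul_assoc, mul_inv_cancel₀ (ne_of_gt hcard), one_mul]
          congr 1
          rw [Real.negMulLog, Real.log_inv]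
          field_simp
  rw [key, Real.logb, add_div]


end SA
end SAlemmas

/-- **Converse bound `R_{Z_Σ} ≥ K`.** Assuming correctness and server security
(user security not needed),
`H(Z_1, …, Z_K | W_1, …, W_K) ≥ H(X_1, …, X_K) ≥ K·L`; consequently, since the keys
are deterministic functions of the source key `Z_Σ`, `H(Z_Σ) ≥ K·L`, so
`L_{Z_Σ} ≥ K·L` and `R_{Z_Σ} = L_{Z_Σ} / L ≥ K`. -/
theorem converse_RZSigma
    (F : Type) [Field F] [Fintype F]
    (K L LX LY LZ : ℕ) (hK : 2 ≤ K) (hL : 1 ≤ L)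
    (Ω : Type) [Fintype Ω] (p : Ω → ℝ)
    (hp0 : ∀ ω, 0 ≤ p ω) (hp1 : (∑ ω, p ω) = 1)
    (W : Fin K → Ω → Fin L → F)
    (Z : Fin K → Ω → Fin LZ → F)
    (X : Fin K → Ω → Fin LX → F)
    (Y : Fin K → Ω → Fin LY → F)
    -- inputs i.i.d. uniform on F^L and independent of the keys
    (hWZ : ∀ (w : Fin K → Fin L → F) (z : Fin K → Fin LZ → F),
      pr p (fun ω => (∀ k, W k ω = w k) ∧ (∀ k, Z k ω = z k))
        = (1 / (Fintype.card F : ℝ) ^ L) ^ K * pr p (fun ω => ∀ k, Z k ω = z k))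
    -- deterministic encoders X_k = φ_k(W_k, Z_k)
    (hX : ∀ k, ∃ φ : (Fin L → F) → (Fin LZ → F) → Fin LX → F,
      ∀ ω, X k ω = φ (W k ω) (Z k ω))
    -- deterministic server maps Y_k = ψ_k(X_1, …, X_K)
    (hY : ∀ k, ∃ ψ : (Fin K → Fin LX → F) → Fin LY → F, ∀ ω, Y k ω = ψ (fun u => X u ω))
    -- correctness: H(Σ_u W_u | Y_k, W_k, Z_k) = 0
    (hCorr : ∀ k, condEnt (Fintype.card F) p (fun ω => ∑ u, W u ω)
        (fun ω => (Y k ω, W k ω, Z k ω)) = 0)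
    -- server security: I(W_1, …, W_K ; X_1, …, X_K) = 0
    (hSec : mutInf (Fintype.card F) p (fun ω => fun k => W k ω)
        (fun ω => fun k => X k ω) = 0)
    (LZS : ℕ) (ZS : Ω → Fin LZS → F)
    -- the keys are deterministic functions of the source key
    (hZS : ∀ k, ∃ g : (Fin LZS → F) → Fin LZ → F, ∀ ω, Z k ω = g (ZS ω)) :
    ent (Fintype.card F) p (fun ω => fun k => X k ω)
      ≤ condEnt (Fintype.card F) p (fun ω => fun k => Z k ω) (fun ω => fun k => W k ω) ∧
    (K : ℝ) * (L : ℝ) ≤ ent (Fintype.card F) p (fun ω => fun k => X k ω) ∧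
    (K : ℝ) * (L : ℝ) ≤ ent (Fintype.card F) p ZS ∧
    K * L ≤ LZS ∧ (K : ℝ) ≤ (LZS : ℝ) / (L : ℝ) := by
  have hq : 1 < Fintype.card F := Fintype.one_lt_card
  set q := Fintype.card F with hqdef
  have hlq : 0 < Real.log q := Real.log_pos (by exact_mod_cast hq)
  choose φ hφ using hX
  choose ψ hψ using hY
  choose gz hgz using hZS
  set W' : Ω → Fin K → Fin L → F := fun ω => fun k => W k ω with hW'
  set Z' : Ω → Fin K → Fin LZ → F := fun ω => fun k => Z k ω with hZ'
  set X' : Ω → Fin K → Fin LX → F := fun ω => fun k => X k ω with hX'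
  set N : ℕ := Fintype.card (Fin K → Fin L → F) with hNdef
  have hNval : N = q ^ (L * K) := by
    rw [hNdef, Fintype.card_fun, Fintype.card_fun, Fintype.card_fin, Fintype.card_fin, ← pow_mul]
  have hNpos : (0 : ℝ) < (N : ℝ) := by
    have : 0 < N := by rw [hNval]; positivity
    exact_mod_cast this
  -- the uniform-independence hypothesis, in packaged form
  have hu : ∀ (w : Fin K → Fin L → F) (z : Fin K → Fin LZ → F),
      pr p (fun ω => W' ω = w ∧ Z' ω = z) = ((N : ℝ))⁻¹ * pr p (fun ω => Z' ω = z) := by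
    intro w z
    have h1 : pr p (fun ω => W' ω = w ∧ Z' ω = z)
        = pr p (fun ω => (∀ k, W k ω = w k) ∧ (∀ k, Z k ω = z k)) :=
      sa_pr_congr fun ω => by
        rw [show (W' ω = w) = (∀ k, W k ω = w k) from propext funext_iff,
          show (Z' ω = z) = (∀ k, Z k ω = z k) from propext funext_iff]
    have h2 : pr p (fun ω => Z' ω = z) = pr p (fun ω => ∀ k, Z k ω = z k) :=
      sa_pr_congr fun ω => by rw [show (Z' ω = z) = (∀ k, Z k ω = z k) from propext funext_iff]
    rw [h1, h2, hWZ w z]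
    congr 1
    rw [hNval, one_div, inv_pow, ← pow_mul]
    push_cast
    rfl
  -- correctness, extracted pointwise
  have hC : ∀ (k : Fin K) (ω ω' : Ω), 0 < p ω → 0 < p ω' →
      ((Y k ω, W k ω, Z k ω) : (Fin LY → F) × (Fin L → F) × (Fin LZ → F))
        = (Y k ω', W k ω', Z k ω') → (∑ u, W u ω) = (∑ u, W u ω') :=
    fun k => sa_condEnt_zero_fun hp0 hq (hCorr k)
  -- realization of any (input, key) pair with a positive-probability key value
  have hreal : ∀ (v : Fin K → Fin L → F) (z : Fin K → Fin LZ → F),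
      0 < pr p (fun ω => Z' ω = z) → ∃ ω, 0 < p ω ∧ W' ω = v ∧ Z' ω = z := by
    intro v z hz
    have hpos : 0 < pr p (fun ω => W' ω = v ∧ Z' ω = z) := by
      rw [hu v z]
      positivity
    obtain ⟨ω, hpω, hE⟩ := sa_exists_of_pr_pos hp0 hpos
    exact ⟨ω, hpω, hE.1, hE.2⟩
  -- key relation: encoders that agree force equal sums
  have hkey : ∀ (z : Fin K → Fin LZ → F), 0 < pr p (fun ω => Z' ω = z) →
      ∀ (v v' : Fin K → Fin L → F) (j : Fin K),
      (fun k => φ k (v k) (z k)) = (fun k => φ k (v' k) (z k)) → v j = v' j →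
      (∑ u, v u) = (∑ u, v' u) := by
    intro z hz v v' j hΦ hj
    obtain ⟨ω, hpω, hWω, hZω⟩ := hreal v z hz
    obtain ⟨ω', hpω', hWω', hZω'⟩ := hreal v' z hz
    have hWu : ∀ u, W u ω = v u := fun u => congrFun hWω u
    have hWu' : ∀ u, W u ω' = v' u := fun u => congrFun hWω' u
    have hZu : ∀ u, Z u ω = z u := fun u => congrFun hZω u
    have hZu' : ∀ u, Z u ω' = z u := fun u => congrFun hZω' u
    have hXu : ∀ u, X u ω = φ u (v u) (z u) := fun u => by rw [hφ u ω, hWu u, hZu u]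
    have hXu' : ∀ u, X u ω' = φ u (v' u) (z u) := fun u => by rw [hφ u ω', hWu' u, hZu' u]
    have harg : (fun u => X u ω) = (fun u => X u ω') := by
      funext u
      rw [hXu u, hXu' u]
      exact congrFun hΦ u
    have hYeq : Y j ω = Y j ω' := by
      rw [hψ j ω, hψ j ω', harg]
    have hsum := hC j ω ω' hpω hpω'
      (by rw [hYeq, hWu j, hWu' j, hZu j, hZu' j, hj])
    calc (∑ u, v u) = ∑ u, W u ω := Finset.sum_congr rfl fun u _ => (hWu u).symm
      _ = ∑ u, W u ω' := hsum
      _ = ∑ u, v' u := Finset.sum_congr rfl fun u _ => hWu' u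
  -- injectivity of the componentwise encoders given a positive-probability key
  have hwinj : ∀ (z : Fin K → Fin LZ → F), 0 < pr p (fun ω => Z' ω = z) →
      ∀ (v v' : Fin K → Fin L → F),
      (fun k => φ k (v k) (z k)) = (fun k => φ k (v' k) (z k)) → v = v' := by
    intro z hz v v' hΦ
    funext k
    obtain ⟨j, hj⟩ := Fintype.exists_ne_of_one_lt_card
      (by rw [Fintype.card_fin]; omega) k
    set u : Fin K → Fin L → F := Function.update v k (v' k) with hudef
    have hΦu : (fun i => φ i (u i) (z i)) = (fun i => φ i (v i) (z i)) := by
      funext i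
      by_cases hik : i = k
      · subst hik
        rw [hudef, Function.update_self]
        exact (congrFun hΦ i).symm
      · rw [hudef, Function.update_of_ne hik]
    have huj : u j = v j := by rw [hudef, Function.update_of_ne hj]
    have hsum := hkey z hz u v j hΦu huj
    rw [hudef, Finset.sum_update_of_mem (Finset.mem_univ k),
      Finset.sdiff_singleton_eq_erase] at hsum
    rw [← Finset.add_sum_erase _ _ (Finset.mem_univ k)] at hsum
    exact (add_right_cancel hsum).symm
  -- H(X) ≤ H(Z | W), using server security
  have hSec' : ent q p W' + ent q p X' - ent q p (fun ω => (W' ω, X' ω)) = 0 := hSec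
  have hcompWX : ent q p (fun ω => (W' ω, X' ω)) ≤ ent q p (fun ω => (Z' ω, W' ω)) := by
    have hcomp : (fun ω => (W' ω, X' ω))
        = (fun ω => (fun c : (Fin K → Fin LZ → F) × (Fin K → Fin L → F) =>
            ((c.2, fun k => φ k (c.2 k) (c.1 k)) :
              (Fin K → Fin L → F) × (Fin K → Fin LX → F))) ((Z' ω, W' ω))) := by
      funext ω
      refine Prod.ext rfl ?_
      funext k
      exact hφ k ω
    rw [hcomp]
    exact sa_ent_comp_le hp0 hq (fun ω => (Z' ω, W' ω))
      (fun c : (Fin K → Fin LZ → F) × (Fin K → Fin L → F) =>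
        ((c.2, fun k => φ k (c.2 k) (c.1 k)) :
          (Fin K → Fin L → F) × (Fin K → Fin LX → F)))
  have hcond : condEnt q p Z' W' = ent q p (fun ω => (Z' ω, W' ω)) - ent q p W' := rfl
  have conc1 : ent q p X' ≤ condEnt q p Z' W' := by
    rw [hcond]; linarith
  -- H(X) ≥ K L
  have hpairXZ : (fun ω => (X' ω, Z' ω))
      = (fun ω => (fun c : (Fin K → Fin L → F) × (Fin K → Fin LZ → F) =>
          ((fun k => φ k (c.1 k) (c.2 k), c.2) :
            (Fin K → Fin LX → F) × (Fin K → Fin LZ → F))) ((W' ω, Z' ω))) := by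
    funext ω
    refine Prod.ext ?_ rfl
    funext k
    exact hφ k ω
  have hinj : ∀ c c' : (Fin K → Fin L → F) × (Fin K → Fin LZ → F),
      0 < pr p (fun ω => (W' ω, Z' ω) = c) → 0 < pr p (fun ω => (W' ω, Z' ω) = c') →
      ((fun k => φ k (c.1 k) (c.2 k), c.2) :
          (Fin K → Fin LX → F) × (Fin K → Fin LZ → F))
        = (fun k => φ k (c'.1 k) (c'.2 k), c'.2) → c = c' := by
    intro c c' h1 h2 hF
    have hz2 : c.2 = c'.2 := (Prod.ext_iff.1 hF).2
    have hzpos : 0 < pr p (fun ω => Z' ω = c.2) := by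
      rw [sa_pair_dist, hu] at h1
      rcases mul_pos_iff.1 h1 with ⟨_, h⟩ | ⟨h', _⟩
      · exact h
      · exact absurd h' (not_lt.2 (le_of_lt (by positivity)))
    have hfst := (Prod.ext_iff.1 hF).1
    dsimp only at hfst
    rw [← hz2] at hfst
    have hw : c.1 = c'.1 := hwinj c.2 hzpos c.1 c'.1 hfst
    exact Prod.ext hw hz2
  have heq : ent q p (fun ω => (X' ω, Z' ω)) = ent q p (fun ω => (W' ω, Z' ω)) := by
    rw [hpairXZ]
    exact sa_ent_comp_eq hp0 q (fun ω => (W' ω, Z' ω))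
      (fun c : (Fin K → Fin L → F) × (Fin K → Fin LZ → F) =>
        ((fun k => φ k (c.1 k) (c.2 k), c.2) :
          (Fin K → Fin LX → F) × (Fin K → Fin LZ → F))) hinj
  have huni : ent q p (fun ω => (W' ω, Z' ω)) = Real.logb q N + ent q p Z' :=
    sa_ent_pair_uniform hp0 hp1 hq W' Z' hu
  have hlogN : Real.logb q (N : ℝ) = (K : ℝ) * L := by
    rw [hNval]
    push_cast
    rw [Real.logb_pow, Real.logb_self_eq_one (by exact_mod_cast hq)]
    push_cast
    ring
  have hsubXZ := sa_ent_pair_le_add hp0 hp1 hq X' Z'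
  have conc2 : (K : ℝ) * L ≤ ent q p X' := by
    have h5 : ent q p (fun ω => (X' ω, Z' ω)) = (K : ℝ) * L + ent q p Z' := by
      rw [heq, huni, hlogN]
    linarith
  -- H(Z_Σ) ≥ K L
  have hZcomp : ent q p Z' ≤ ent q p ZS := by
    have hc : Z' = fun ω => (fun s : Fin LZS → F => (fun k => gz k s : Fin K → Fin LZ → F)) (ZS ω) := by
      funext ω
      funext k
      exact hgz k ω
    rw [hc]
    exact sa_ent_comp_le hp0 hq ZS
      (fun s : Fin LZS → F => (fun k => gz k s : Fin K → Fin LZ → F))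
  have hcond_le : condEnt q p Z' W' ≤ ent q p Z' := by
    have := sa_ent_pair_le_add hp0 hp1 hq Z' W'
    rw [hcond]
    linarith
  have conc3 : (K : ℝ) * L ≤ ent q p ZS := by linarith
  -- L_{Z_Σ} ≥ K L
  have hZSle : ent q p ZS ≤ Real.logb q (Fintype.card (Fin LZS → F)) :=
    sa_ent_le_logb_card hp0 hp1 hq ZS
  have hlogZS : Real.logb q ((Fintype.card (Fin LZS → F) : ℕ) : ℝ) = (LZS : ℝ) := by
    rw [Fintype.card_fun, Fintype.card_fin]
    push_cast
    rw [Real.logb_pow, Real.logb_self_eq_one (by exact_mod_cast hq)]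
    ring
  have hreal4 : (K : ℝ) * L ≤ (LZS : ℝ) := by
    rw [← hlogZS]
    exact le_trans conc3 hZSle
  have conc4 : K * L ≤ LZS := by exact_mod_cast hreal4
  have hLpos : (0 : ℝ) < (L : ℝ) := by exact_mod_cast hL
  have conc5 : (K : ℝ) ≤ (LZS : ℝ) / (L : ℝ) := by
    rw [le_div_iff₀ hLpos]
    exact hreal4
  exact ⟨conc1, conc2, conc3, conc4, conc5⟩
end

section
/- (Theorem 1 achievability scheme) Fix a prime power q and K ≥ 2. Let W_1,…,W_K be F_q-valued random variables with arbitrary joint distribution and let N_1,…,N_K be i.i.d. uniform on F_q, with (N_1,…,N_K) independent of (W_1,…,W_K). Define Z_Σ = (N_1,…,N_K), Z_k = (N_k, Σ_{u=1}^K N_u), X_k = W_k + N_k, and Y_k = Σ_{u=1}^K X_u for each k. Then: (correctness) Σ_{u=1}^K W_u is a deterministic function of (Y_k, W_k, Z_k) for every k; (server security) I(W_1,…,W_K ; X_1,…,X_K) = 0; (user security) I(W_1,…,W_K ; Y_k | Σ_{u=1}^K W_u, W_k, Z_k) = 0 for every k. This protocol has L = 1, L_X = L_Y = 1, each key Z_k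 consists of 2 symbols of F_q, and Z_Σ consists of K symbols of F_q, achieving the rate tuple (R_X, R_Y, R_Z, R_{Z_Σ}) = (1, 1, 2, K). -/
open Classical
open scoped BigOperators

lemma pr_congr {Ω : Type*} [Fintype Ω] (p : Ω → ℝ) {E E' : Ω → Prop}
    (h : ∀ ω, E ω ↔ E' ω) : pr p E = pr p E' := by
  unfold pr
  exact Finset.sum_congr rfl fun ω _ => by rw [if_congr (h ω) rfl rfl]

lemma pr_false {Ω : Type*} [Fintype Ω] (p : Ω → ℝ) {E : Ω → Prop}
    (h : ∀ ω, ¬ E ω) : pr p E = 0 :=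
  Finset.sum_eq_zero fun ω _ => if_neg (h ω)

lemma pr_partition {Ω α : Type*} [Fintype Ω] [Fintype α] (p : Ω → ℝ) (A : Ω → α)
    (E : Ω → Prop) : pr p E = ∑ a, pr p (fun ω => A ω = a ∧ E ω) := by
  unfold pr
  rw [Finset.sum_comm]
  refine Finset.sum_congr rfl fun ω _ => ?_
  by_cases hE : E ω
  · simp only [hE, and_true, if_pos]
    rw [Finset.sum_ite_eq Finset.univ (A ω) (fun _ => p ω)]
    simp
  · simp [hE]

lemma ent_map_inj {Ω α β : Type*} [Fintype Ω] [Fintype α] [Fintype β] (q : ℕ)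
    (p : Ω → ℝ) {e : α → β} (he : Function.Injective e) (A : Ω → α) :
    ent q p (fun ω => e (A ω)) = ent q p A := by
  unfold ent
  congr 1
  calc ∑ b, pr p (fun ω => e (A ω) = b) * Real.logb q (pr p (fun ω => e (A ω) = b))
      = ∑ b ∈ Finset.univ.image e,
          pr p (fun ω => e (A ω) = b) * Real.logb q (pr p (fun ω => e (A ω) = b)) := by
        symm
        apply Finset.sum_subset (Finset.subset_univ _)
        intro b _ hb
        have h0 : pr p (fun ω => e (A ω) = b) = 0 := by
          apply pr_false
          intro ω hω
          exact hb (Finset.mem_image.mpr ⟨A ω, Finset.mem_univ _, hω⟩)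
        simp [h0]
    _ = ∑ a, pr p (fun ω => e (A ω) = e a) * Real.logb q (pr p (fun ω => e (A ω) = e a)) := by
        rw [Finset.sum_image (fun a _ b _ h => he h)]
    _ = ∑ a, pr p (fun ω => A ω = a) * Real.logb q (pr p (fun ω => A ω = a)) := by
        refine Finset.sum_congr rfl fun a _ => ?_
        rw [pr_congr p (fun ω => he.eq_iff)]

/-- **Theorem 1 achievability scheme.** With arbitrary inputs `W_k ∈ F` and
`N_1, …, N_K` i.i.d. uniform on `F` independent of the inputs, the scheme
`Z_Σ = (N_1, …, N_K)`, `Z_k = (N_k, Σ_u N_u)`, `X_k = W_k + N_k`,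
`Y_k = Σ_u X_u` satisfies correctness, server security and user security,
achieving `(R_X, R_Y, R_Z, R_{Z_Σ}) = (1, 1, 2, K)` (here `L = 1`,
`L_X = L_Y = 1`, `Z_k ∈ F²`, `Z_Σ ∈ F^K`). -/
theorem theorem1_achievability_scheme
    (F : Type) [Field F] [Fintype F]
    (K : ℕ) (hK : 2 ≤ K)
    (Ω : Type) [Fintype Ω] (p : Ω → ℝ)
    (hp0 : ∀ ω, 0 ≤ p ω) (hp1 : (∑ ω, p ω) = 1)
    (W N : Fin K → Ω → F)
    -- (N_1, …, N_K) i.i.d. uniform on F and independent of (W_1, …, W_K)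
    (hWN : ∀ (w n : Fin K → F),
      pr p (fun ω => (∀ k, W k ω = w k) ∧ (∀ k, N k ω = n k))
        = pr p (fun ω => ∀ k, W k ω = w k) * (1 / (Fintype.card F : ℝ)) ^ K) :
    -- correctness: Σ_u W_u is a deterministic function of (Y_k, W_k, Z_k)
    (∀ k : Fin K, ∃ d : F → F → F × F → F, ∀ ω,
      (∑ u, W u ω)
        = d (∑ u, (W u ω + N u ω)) (W k ω) (N k ω, ∑ u, N u ω)) ∧
    -- server security: I(W_1, …, W_K ; X_1, …, X_K) = 0
    (mutInf (Fintype.card F) p (fun ω => fun k => W k ω)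
        (fun ω => fun k => W k ω + N k ω) = 0) ∧
    -- user security: I(W_1, …, W_K ; Y_k | Σ_u W_u, W_k, Z_k) = 0
    (∀ k : Fin K, condMutInf (Fintype.card F) p (fun ω => fun u => W u ω)
        (fun ω => ∑ u, (W u ω + N u ω))
        (fun ω => (∑ u, W u ω, W k ω, (N k ω, ∑ u, N u ω))) = 0) := by
  have hQ0 : (Fintype.card F : ℝ) ≠ 0 := by
    exact_mod_cast Fintype.card_ne_zero
  set c : ℝ := (1 / (Fintype.card F : ℝ)) ^ K with hcdef
  have hc : c ≠ 0 := pow_ne_zero _ (one_div_ne_zero hQ0)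
  have hQKc : (Fintype.card F : ℝ) ^ K * c = 1 := by
    rw [hcdef, one_div, inv_pow, mul_inv_cancel₀ (pow_ne_zero _ hQ0)]
  set P : (Fin K → F) → ℝ := fun w => pr p (fun ω => (fun k => W k ω) = w) with hPdef
  have hP : ∀ w, P w = pr p (fun ω => ∀ k, W k ω = w k) :=
    fun w => pr_congr p (fun ω => funext_iff)
  have hjointWN : ∀ w x : Fin K → F,
      pr p (fun ω => (fun k => W k ω) = w ∧ (fun k => W k ω + N k ω) = x) = P w * c := by
    intro w x
    rw [hP w, ← hWN w (fun k => x k - w k)]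
    apply pr_congr
    intro ω
    constructor
    · rintro ⟨h1, h2⟩
      have h1' := funext_iff.mp h1
      have h2' := funext_iff.mp h2
      refine ⟨h1', fun k => ?_⟩
      have := h2' k
      rw [h1' k] at this
      exact eq_sub_of_add_eq' this
    · rintro ⟨h1, h2⟩
      refine ⟨funext h1, funext fun k => ?_⟩
      rw [h1 k, h2 k]
      ring
  have hPsum : ∑ w, P w = 1 := by
    have h := pr_partition p (fun ω => fun k => W k ω) (fun _ => True)
    have h1 : pr p (fun _ => True) = 1 := by
      unfold pr; simpa using hp1
    have h2 : ∀ w : Fin K → F,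
        pr p (fun ω => (fun k => W k ω) = w ∧ True) = P w :=
      fun w => pr_congr p (fun ω => Iff.of_eq (and_true _))
    rw [h1] at h
    rw [← Finset.sum_congr rfl (fun w _ => h2 w)]
    exact h.symm
  have hX : ∀ x : Fin K → F, pr p (fun ω => (fun k => W k ω + N k ω) = x) = c := by
    intro x
    rw [pr_partition p (fun ω => fun k => W k ω)]
    calc ∑ w, pr p (fun ω => (fun k => W k ω) = w ∧ (fun k => W k ω + N k ω) = x)
        = ∑ w, P w * c := Finset.sum_congr rfl (fun w _ => hjointWN w x)
      _ = (∑ w, P w) * c := by rw [Finset.sum_mul]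
      _ = c := by rw [hPsum, one_mul]
  have hjointpair : ∀ (w x : Fin K → F),
      pr p (fun ω => ((fun k => W k ω), fun k => W k ω + N k ω) = (w, x)) = P w * c := by
    intro w x
    rw [← hjointWN w x]
    apply pr_congr
    intro ω
    rw [Prod.mk.injEq]
  set L : ℝ := Real.logb (Fintype.card F) c with hLdef
  refine ⟨?_, ?_, ?_⟩
  · -- correctness
    intro k
    refine ⟨fun y _ z => y - z.2, fun ω => ?_⟩
    show ∑ u, W u ω = (∑ u, (W u ω + N u ω)) - ∑ u, N u ω
    rw [Finset.sum_add_distrib]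
    ring
  · -- server security
    have key : ∀ w : Fin K → F,
        ((Fintype.card F : ℝ)) ^ K * ((P w * c) * Real.logb (Fintype.card F) (P w * c))
          = P w * Real.logb (Fintype.card F) (P w) + P w * L := by
      intro w
      by_cases h : P w = 0
      · simp [h]
      · rw [Real.logb_mul h hc]
        calc ((Fintype.card F : ℝ)) ^ K *
              ((P w * c) * (Real.logb (Fintype.card F) (P w) + L))
            = ((Fintype.card F : ℝ) ^ K * c) *
              (P w * (Real.logb (Fintype.card F) (P w) + L)) := by ring
          _ = P w * Real.logb (Fintype.card F) (P w) + P w * L := by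
              rw [hQKc]; ring
    have hcardfun : (Fintype.card (Fin K → F) : ℝ) = (Fintype.card F : ℝ) ^ K := by
      rw [Fintype.card_fun, Fintype.card_fin]
      push_cast
      ring
    have hentX : ent (Fintype.card F) p (fun ω => fun k => W k ω + N k ω) = -L := by
      unfold ent
      rw [Finset.sum_congr rfl (fun x _ => by rw [hX x] :
        ∀ x ∈ Finset.univ, pr p (fun ω => (fun k => W k ω + N k ω) = x) *
          Real.logb (Fintype.card F) (pr p (fun ω => (fun k => W k ω + N k ω) = x))
          = c * L)]
      rw [Finset.sum_const, Finset.card_univ, nsmul_eq_mul, hcardfun]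
      rw [← mul_assoc, hQKc, one_mul]
    have hentPair : ent (Fintype.card F) p
        (fun ω => ((fun k => W k ω), fun k => W k ω + N k ω))
        = (-∑ w, P w * Real.logb (Fintype.card F) (P w)) - L := by
      unfold ent
      rw [Fintype.sum_prod_type]
      have step : ∀ w : Fin K → F,
          (∑ x : Fin K → F,
            pr p (fun ω => ((fun k => W k ω), fun k => W k ω + N k ω) = (w, x)) *
            Real.logb (Fintype.card F)
              (pr p (fun ω => ((fun k => W k ω), fun k => W k ω + N k ω) = (w, x))))
          = P w * Real.logb (Fintype.card F) (P w) + P w * L := by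
        intro w
        rw [Finset.sum_congr rfl (fun x _ => by rw [hjointpair w x])]
        rw [Finset.sum_const, Finset.card_univ, nsmul_eq_mul, hcardfun]
        exact key w
      rw [Finset.sum_congr rfl (fun w _ => step w)]
      rw [Finset.sum_add_distrib, ← Finset.sum_mul, hPsum]
      ring
    have hentW : ent (Fintype.card F) p (fun ω => fun k => W k ω)
        = -∑ w, P w * Real.logb (Fintype.card F) (P w) := rfl
    unfold mutInf
    rw [hentW, hentX, hentPair]
    ring
  · -- user security
    intro k
    unfold condMutInf
    have hsum : ∀ ω, (∑ u, (W u ω + N u ω)) = (∑ u, W u ω) + ∑ u, N u ω :=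
      fun ω => Finset.sum_add_distrib
    have he1 : Function.Injective
        (fun z : F × F × (F × F) => ((z.1 + z.2.2.2 : F), z)) := by
      intro a b h
      exact (Prod.ext_iff.mp h).2
    have he2 : Function.Injective
        (fun xz : (Fin K → F) × (F × F × (F × F)) =>
          (xz.1, ((xz.2.1 + xz.2.2.2.2 : F), xz.2))) := by
      intro a b h
      obtain ⟨h1, h2⟩ := Prod.ext_iff.mp h
      obtain ⟨_, h4⟩ := Prod.ext_iff.mp h2
      exact Prod.ext_iff.mpr ⟨h1, h4⟩
    have e1 : ent (Fintype.card F) p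
        (fun ω => ((∑ u, (W u ω + N u ω)),
          ((∑ u, W u ω), W k ω, (N k ω, ∑ u, N u ω))))
        = ent (Fintype.card F) p
          (fun ω => ((∑ u, W u ω), W k ω, (N k ω, ∑ u, N u ω))) := by
      have hf : (fun ω => ((∑ u, (W u ω + N u ω)),
            ((∑ u, W u ω), W k ω, (N k ω, ∑ u, N u ω))))
          = (fun ω => (fun z : F × F × (F × F) => ((z.1 + z.2.2.2 : F), z))
              ((∑ u, W u ω), W k ω, (N k ω, ∑ u, N u ω))) := by
        funext ω
        simp only [hsum ω]
      rw [hf, ent_map_inj _ p he1]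
    have e2 : ent (Fintype.card F) p
        (fun ω => ((fun u => W u ω), (∑ u, (W u ω + N u ω)),
          ((∑ u, W u ω), W k ω, (N k ω, ∑ u, N u ω))))
        = ent (Fintype.card F) p
          (fun ω => ((fun u => W u ω), ((∑ u, W u ω), W k ω, (N k ω, ∑ u, N u ω)))) := by
      have hf : (fun ω => ((fun u => W u ω), (∑ u, (W u ω + N u ω)),
            ((∑ u, W u ω), W k ω, (N k ω, ∑ u, N u ω))))
          = (fun ω => (fun xz : (Fin K → F) × (F × F × (F × F)) =>
              (xz.1, ((xz.2.1 + xz.2.2.2.2 : F), xz.2)))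
              ((fun u => W u ω), ((∑ u, W u ω), W k ω, (N k ω, ∑ u, N u ω)))) := by
        funext ω
        simp only [hsum ω]
      rw [hf, ent_map_inj _ p he2]
    rw [e1, e2]
    ring
end
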